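/- Let Q be a discrete memoryless channel with finite input and output alphabets, let p_min be its smallest nonzero transition probability, let w⃗_0, w⃗_1 be input strings of length n such that for every i the distributions Q(·|w⃗_0^{(i)}) and Q(·|w⃗_1^{(i)}) have a common support point, and let D_0, D_1 be a partition of the n-fold output alphabet. Define p_{e,0} = Q^n(D_1 | w⃗_0) and p_{e,1} = Q^n(D_0 | w⃗_1). Then for any s ∈ [0,1], at least one of the following holds: (a) −log p_{e,0} ≤ d_C(w⃗_0, w⃗_1, Q^n, s) − s·d_C'(w⃗_0, w⃗_1, Q^n, s) + √(2n)·log(1/p_min) + log 4; (b) −log p_{e,1} ≤ d_C(w⃗_0, w⃗_1, Q^n, s) + (1−s)·d_C'(w⃗_0, w⃗_1, Q^n, s) + √(2n)·log(1/p_min) + log 4. -/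

import Mathlib

open scoped BigOperators
open Finset

noncomputable section

/-- A probability mass function on a finite type, given as a real-valued function. -/
def IsPMF {α : Type*} [Fintype α] (p : α → ℝ) : Prop :=
  (∀ x, 0 ≤ p x) ∧ ∑ x, p x = 1

/-- A discrete memoryless channel: every input symbol yields a PMF on outputs. -/
def IsChannel {X Y : Type*} [Fintype Y] (P : X → Y → ℝ) : Prop :=
  ∀ x, IsPMF (P x)

/-- The Chernoff sum `Σ_x p(x)^{1-s} q(x)^s`, with terms where `p` or `q` vanish removed;
this realizes the continuous extension to the endpoints `s ∈ {0,1}`. -/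
def cherSum {α : Type*} [Fintype α] (p q : α → ℝ) (s : ℝ) : ℝ :=
  ∑ x, if p x = 0 ∨ q x = 0 then 0 else p x ^ (1 - s) * q x ^ s

/-- The Chernoff divergence `d_C(p, q, s)`. -/
def dC {α : Type*} [Fintype α] (p q : α → ℝ) (s : ℝ) : ℝ :=
  - Real.log (cherSum p q s)

/-- First derivative of the Chernoff divergence with respect to `s`. -/
def dC' {α : Type*} [Fintype α] (p q : α → ℝ) (s : ℝ) : ℝ :=
  deriv (dC p q) s

/-- Second derivative of the Chernoff divergence with respect to `s`. -/
def dC'' {α : Type*} [Fintype α] (p q : α → ℝ) (s : ℝ) : ℝ :=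
  deriv (deriv (dC p q)) s

/-- The tilted distribution `Q_s`. -/
def tilted {α : Type*} [Fintype α] (p q : α → ℝ) (s : ℝ) (x : α) : ℝ :=
  (if p x = 0 ∨ q x = 0 then 0 else p x ^ (1 - s) * q x ^ s) / cherSum p q s

/-- Kullback–Leibler divergence (natural log), with the convention `0 log 0 = 0`. -/
def KLdiv {α : Type*} [Fintype α] (p q : α → ℝ) : ℝ :=
  ∑ x, if p x = 0 then 0 else p x * Real.log (p x / q x)

/-- Product (memoryless) output distribution of a channel given an input string. -/
def prodDist {X Y : Type*} [Fintype Y] {n : ℕ} (P : X → Y → ℝ) (w : Fin n → X) :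
    (Fin n → Y) → ℝ :=
  fun y => ∏ i, P (w i) (y i)

/-- Two distributions have a common support point. -/
def CommonSupport {α : Type*} (p q : α → ℝ) : Prop :=
  ∃ x, p x ≠ 0 ∧ q x ≠ 0

/-- `pmin` is the smallest nonzero transition probability of the channel `Q`. -/
def MinTransChan {X Y : Type*} (Q : X → Y → ℝ) (pmin : ℝ) : Prop :=
  0 < pmin ∧ (∃ x y, Q x y = pmin) ∧ ∀ x y, Q x y ≠ 0 → pmin ≤ Q x y

/-- `pmin` is the smallest nonzero transition probability among the channels `P` and `Q`. -/
def MinTransPair {Y Z : Type*} (P : Bool → Y → ℝ) (Q : Bool → Z → ℝ) (pmin : ℝ) : Prop :=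
  0 < pmin ∧ ((∃ b y, P b y = pmin) ∨ (∃ b z, Q b z = pmin)) ∧
    (∀ b y, P b y ≠ 0 → pmin ≤ P b y) ∧ ∀ b z, Q b z ≠ 0 → pmin ≤ Q b z

/-- `pmin` is the smallest nonzero probability among the values of two distributions. -/
def MinProbPair {α : Type*} (p q : α → ℝ) (pmin : ℝ) : Prop :=
  0 < pmin ∧ ((∃ x, p x = pmin) ∨ (∃ x, q x = pmin)) ∧
    (∀ x, p x ≠ 0 → pmin ≤ p x) ∧ ∀ x, q x ≠ 0 → pmin ≤ q x

/-- A deterministic `n`-step 2-hop protocol: codewords `x false = x⃗₀`, `x true = x⃗₁`,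
relay maps (the `i`-th transmission may depend only on the previously received symbols),
and a decoder. -/
structure DetProtocol (Y Z : Type*) (n : ℕ) where
  x : Bool → Fin n → Bool
  relay : (i : Fin n) → (Fin i → Y) → Bool
  dec : (Fin n → Z) → Bool

/-- The relay transmissions `W_1, …, W_n` determined by the received sequence `y`. -/
def DetProtocol.W {Y Z : Type*} {n : ℕ} (π : DetProtocol Y Z n) (y : Fin n → Y)
    (i : Fin n) : Bool :=
  π.relay i (fun j => y (Fin.castLE i.isLt.le j))

/-- `errProb P Q π b` is the conditional error probability `ℙ(Θ̂ = ¬b ∣ Θ = b)`. -/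
def errProb {Y Z : Type*} [Fintype Y] [Fintype Z] {n : ℕ}
    (P : Bool → Y → ℝ) (Q : Bool → Z → ℝ) (π : DetProtocol Y Z n) (b : Bool) : ℝ :=
  ∑ y : Fin n → Y, ∑ z : Fin n → Z,
    prodDist P (π.x b) y * prodDist Q (π.W y) z *
      (if π.dec z = !b then 1 else 0)

/-- Probability (given `Θ = b`) that the relay receives the prefix `ypre` in the
first `k` time steps. -/
def prefixProb {Y Z : Type*} [Fintype Y] {n : ℕ} (P : Bool → Y → ℝ)
    (π : DetProtocol Y Z n) (b : Bool) {k : ℕ} (hk : k ≤ n) (ypre : Fin k → Y) : ℝ :=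
  ∏ i : Fin k, P (π.x b (Fin.castLE hk i)) (ypre i)

/-- `errGiven P Q π b hk ypre` is the conditional error probability `p_{e,b}(y_{1…k})`:
the probability that `Θ̂ = ¬b` given `Θ = b` and that the relay receives `ypre` in the
first `k` time steps. -/
def errGiven {Y Z : Type*} [Fintype Y] [Fintype Z] {n : ℕ}
    (P : Bool → Y → ℝ) (Q : Bool → Z → ℝ) (π : DetProtocol Y Z n) (b : Bool)
    {k : ℕ} (hk : k ≤ n) (ypre : Fin k → Y) : ℝ :=
  (∑ y : Fin n → Y, ∑ z : Fin n → Z,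
      Set.indicator {y' : Fin n → Y | ∀ i : Fin k, y' (Fin.castLE hk i) = ypre i}
          (fun _ => (1 : ℝ)) y *
        prodDist P (π.x b) y * prodDist Q (π.W y) z *
        (if π.dec z = !b then 1 else 0)) /
    prefixProb P π b hk ypre

/-- The first `k` relay transmissions `w⃗(y_{1…k})`, determined by the first `k`
received symbols. -/
def relayPrefix {Y Z : Type*} {n : ℕ} (π : DetProtocol Y Z n) {k : ℕ} (hk : k ≤ n)
    (ypre : Fin k → Y) (i : Fin k) : Bool :=
  π.relay (Fin.castLE hk i) (fun j => ypre (Fin.castLE i.isLt.le j))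

/-- Probability that the decoder outputs `b` when the relay input string is `w`. -/
def decProb {Z : Type*} [Fintype Z] {n : ℕ} (Q : Bool → Z → ℝ)
    (dec : (Fin n → Z) → Bool) (b : Bool) (w : Fin n → Bool) : ℝ :=
  ∑ z : Fin n → Z, prodDist Q w z * (if dec z = b then 1 else 0)

/-- `w` extends the relay's first `k` transmissions (after receiving `ypre`) to length `n`,
minimizing the probability that the decoder outputs `b`, i.e. `w = w⃗_{1-b}(y_{1…k})`. -/
def IsBestExtension {Y Z : Type*} [Fintype Z] {n : ℕ} (Q : Bool → Z → ℝ)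
    (π : DetProtocol Y Z n) (b : Bool) {k : ℕ} (hk : k ≤ n) (ypre : Fin k → Y)
    (w : Fin n → Bool) : Prop :=
  (∀ i : Fin k, w (Fin.castLE hk i) = relayPrefix π hk ypre i) ∧
    ∀ w' : Fin n → Bool,
      (∀ i : Fin k, w' (Fin.castLE hk i) = relayPrefix π hk ypre i) →
        decProb Q π.dec b w ≤ decProb Q π.dec b w'

/-- A randomized `n`-step 2-hop protocol: a finite collection of deterministic
protocols together with a probability distribution (the shared private randomness). -/
structure RandProtocol (Y Z : Type*) (n : ℕ) where
  m : ℕ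
  ρ : Fin m → ℝ
  det : Fin m → DetProtocol Y Z n

/-- Validity of the randomness distribution of a randomized protocol. -/
def RandProtocol.Valid {Y Z : Type*} {n : ℕ} (π : RandProtocol Y Z n) : Prop :=
  (∀ r, 0 ≤ π.ρ r) ∧ ∑ r, π.ρ r = 1

/-- Overall error probability `ℙ(Θ̂ ≠ Θ)` of a randomized protocol, with `Θ` uniform. -/
def randPe {Y Z : Type*} [Fintype Y] [Fintype Z] {n : ℕ}
    (P : Bool → Y → ℝ) (Q : Bool → Z → ℝ) (π : RandProtocol Y Z n) : ℝ :=
  ∑ r, π.ρ r * ((errProb P Q (π.det r) false + errProb P Q (π.det r) true) / 2)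

/-- The 2-hop error exponent `E(P,Q)`: the supremum, over sequences of (randomized)
protocols, of the liminf of `-(1/n) log P_e(n,P,Q)`. -/
def twoHopExponent {Y Z : Type*} [Fintype Y] [Fintype Z]
    (P : Bool → Y → ℝ) (Q : Bool → Z → ℝ) : ℝ :=
  sSup { E | ∃ π : (n : ℕ) → RandProtocol Y Z n, (∀ n, (π n).Valid) ∧
    E = Filter.liminf (fun n : ℕ => -(1 / (n : ℝ)) * Real.log (randPe P Q (π n)))
          Filter.atTop }

/-- `m` is the unique global maximizer of `g` on `[0,1]`. -/
def UniqueArgmax (g : ℝ → ℝ) (m : ℝ) : Prop :=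
  m ∈ Set.Icc (0 : ℝ) 1 ∧ ∀ s ∈ Set.Icc (0 : ℝ) 1, s ≠ m → g s < g m

/-- `g` is skewed with respect to `s*`. -/
def SkewedFun (sStar : ℝ) (g : ℝ → ℝ) : Prop :=
  ∃ m, UniqueArgmax g m ∧ (m < sStar ∨ 1 - sStar < m)

/-- `g` is balanced with respect to `s*`. -/
def BalancedFun (sStar : ℝ) (g : ℝ → ℝ) : Prop :=
  ∃ m, UniqueArgmax g m ∧ sStar < m ∧ m < 1 - sStar

/-- `g` is neutral with respect to `s*`. -/
def NeutralFun (sStar : ℝ) (g : ℝ → ℝ) : Prop :=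
  ∃ m, UniqueArgmax g m ∧ (m = sStar ∨ m = 1 - sStar)

/-- `g` and `h` are of strictly opposite type w.r.t. `s*`. -/
def StrictlyOppositeType (sStar : ℝ) (g h : ℝ → ℝ) : Prop :=
  (SkewedFun sStar g ∧ BalancedFun sStar h) ∨ (BalancedFun sStar g ∧ SkewedFun sStar h)

/-- `g` and `h` are of weakly opposite type w.r.t. `s*`. -/
def WeaklyOppositeType (sStar : ℝ) (g h : ℝ → ℝ) : Prop :=
  ((SkewedFun sStar g ∨ NeutralFun sStar g) ∧ (BalancedFun sStar h ∨ NeutralFun sStar h)) ∨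
    ((BalancedFun sStar g ∨ NeutralFun sStar g) ∧ (SkewedFun sStar h ∨ NeutralFun sStar h))

/-- `g` is non-constant on `[0,1]`. -/
def NonConstantOn (g : ℝ → ℝ) : Prop :=
  ∃ s₁ ∈ Set.Icc (0 : ℝ) 1, ∃ s₂ ∈ Set.Icc (0 : ℝ) 1, g s₁ ≠ g s₂

/-- The quantity `E_s` from the paper. -/
def Efun {Y Z : Type*} [Fintype Y] [Fintype Z]
    (P : Bool → Y → ℝ) (Q : Bool → Z → ℝ) (s : ℝ) : ℝ :=
  min (max (dC (P false) (P true) s) (dC (P false) (P true) (1 - s)))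
      (max (dC (Q false) (Q true) s) (dC (Q false) (Q true) (1 - s)))


/-!
Tilting `p` and `q` by `s` gives the weights `p ^ (1 - s) * q ^ s = p * exp (s * llr)`, where
`llr = log (q / p)`; normalized, they form a distribution under which `llr` has mean `-d_C'(s)`
and variance `-d_C''(s)`. By Chebyshev, half of the tilted mass lies where `llr` is within
`t = √(2 · (-d_C''(s)))` of its mean, so a quarter of it lies there inside `D₁` or inside `D₀`.
On that set `p ≥ tilted · exp (-s (t - d_C'))` and `q ≥ tilted · exp (-(1 - s) (d_C' + t))`,
which gives (a) or (b) with `s t`, resp. `(1 - s) t`, in place of the `√(2n) log (1 / p_min)`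
term. For a memoryless channel `d_C` is additive over the letters, so `-d_C''` is a sum of `n`
per-letter variances, each at most `log (1 / p_min) ^ 2` because `|llr| ≤ log (1 / p_min)`.
-/

theorem Finset.sum_div_two_le_sum_filter_le {ι : Type*} (s : Finset ι) (w f : ι → ℝ) {V : ℝ}
    [DecidablePred (fun i => f i ≤ 2 * V)] (hV : 0 ≤ V) (hw : ∀ i ∈ s, 0 ≤ w i)
    (hf : ∀ i ∈ s, 0 ≤ f i) (hsum : ∑ i ∈ s, w i * f i ≤ V * ∑ i ∈ s, w i) :
    (∑ i ∈ s, w i) / 2 ≤ ∑ i ∈ s with f i ≤ 2 * V, w i := by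
  rw [← sum_filter_add_sum_filter_not s (fun i => f i ≤ 2 * V) w,
    ← sum_filter_add_sum_filter_not s (fun i => f i ≤ 2 * V) (fun i => w i * f i)] at hsum
  rw [← sum_filter_add_sum_filter_not s (fun i => f i ≤ 2 * V) w]
  simp only [not_le] at hsum ⊢
  set good := s.filter (fun i => f i ≤ 2 * V)
  set bad := s.filter (fun i => 2 * V < f i)
  by_contra! hbad
  have hgood : 0 ≤ ∑ i ∈ good, w i := sum_nonneg fun i hi => hw i (mem_filter.1 hi).1
  have hgood' : 0 ≤ ∑ i ∈ good, w i * f i :=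
    sum_nonneg fun i hi => mul_nonneg (hw i (mem_filter.1 hi).1) (hf i (mem_filter.1 hi).1)
  obtain ⟨i, hi, hwi⟩ : ∃ i ∈ bad, (0 : ℝ) < w i :=
    exists_lt_of_sum_lt (by rw [sum_const_zero]; linarith)
  have hlt : 2 * V * ∑ i ∈ bad, w i < ∑ i ∈ bad, w i * f i := by
    rw [mul_sum]
    refine sum_lt_sum (fun j hj => ?_) ⟨i, hi, ?_⟩
    · rw [mem_filter] at hj
      nlinarith [hw j hj.1]
    · rw [mem_filter] at hi
      nlinarith
  nlinarith [mul_nonneg hV (by linarith : 0 ≤ ∑ i ∈ bad, w i - ∑ i ∈ good, w i)]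

theorem Real.log_le_log_sum_add_of_le_mul_exp {ι : Type*} {B D : Finset ι} {w r : ι → ℝ}
    {a c : ℝ} (hBD : B ⊆ D) (hr : ∀ i ∈ D, 0 ≤ r i) (ha : 0 < a) (haB : a ≤ ∑ i ∈ B, w i)
    (hwr : ∀ i ∈ B, w i ≤ r i * exp c) : log a ≤ log (∑ i ∈ D, r i) + c := by
  have hle : a ≤ (∑ i ∈ D, r i) * exp c := by
    calc a ≤ ∑ i ∈ B, w i := haB
      _ ≤ (∑ i ∈ B, r i) * exp c := (sum_le_sum hwr).trans_eq (sum_mul _ _ _).symm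
      _ ≤ (∑ i ∈ D, r i) * exp c := mul_le_mul_of_nonneg_right
          (sum_le_sum_of_subset_of_nonneg hBD fun i hi _ => hr i hi) (exp_pos c).le
  have hD : 0 < ∑ i ∈ D, r i := (mul_pos_iff_of_pos_right (exp_pos c)).1 (ha.trans_le hle)
  calc log a ≤ log ((∑ i ∈ D, r i) * exp c) := log_le_log ha hle
    _ = log (∑ i ∈ D, r i) + c := by rw [log_mul hD.ne' (exp_pos c).ne', log_exp]

theorem IsPMF.le_one {α : Type*} [Fintype α] {p : α → ℝ} (hp : IsPMF p) (x : α) : p x ≤ 1 :=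
  hp.2 ▸ single_le_sum (fun y _ => hp.1 y) (mem_univ x)

namespace Chernoff

open Real

section Tilting

variable {α : Type*} (p q : α → ℝ)

def llr (x : α) : ℝ := log (q x) - log (p x)

def tiltedWeight (s : ℝ) (x : α) : ℝ := p x * exp (s * llr p q x)

variable {p q}

theorem tiltedWeight_nonneg (hp : ∀ x, 0 ≤ p x) (s : ℝ) (x : α) : 0 ≤ tiltedWeight p q s x :=
  mul_nonneg (hp x) (exp_pos _).le

theorem tiltedWeight_eq_exp {x : α} (hx : 0 < p x) (s : ℝ) :
    tiltedWeight p q s x = exp (log (p x) + s * llr p q x) := by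
  rw [tiltedWeight, exp_add, exp_log hx]

theorem tiltedWeight_eq_mul_exp {x : α} (hpx : 0 < p x) (hqx : 0 < q x) (s : ℝ) :
    tiltedWeight p q s x = q x * exp (-((1 - s) * llr p q x)) := by
  rw [tiltedWeight_eq_exp hpx, ← exp_log hqx, ← exp_add]
  congr 1
  rw [llr]
  ring

theorem hasDerivAt_tiltedWeight (x : α) (s : ℝ) :
    HasDerivAt (fun u => tiltedWeight p q u x) (tiltedWeight p q s x * llr p q x) s :=
  ((hasDerivAt_mul_const (llr p q x)).exp.const_mul (p x)).congr_deriv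
    (by rw [tiltedWeight]; ring)

end Tilting

variable {α : Type*} [Fintype α] (p q : α → ℝ)

open scoped Classical in
def commonSupp : Finset α := univ.filter (fun x => p x ≠ 0 ∧ q x ≠ 0)

def tiltedMoment (k : ℕ) (s : ℝ) : ℝ :=
  ∑ x ∈ commonSupp p q, tiltedWeight p q s x * llr p q x ^ k

open scoped Classical in
def typicalSet (s : ℝ) : Finset α :=
  (commonSupp p q).filter fun x => (llr p q x + dC' p q s) ^ 2 ≤ 2 * -dC'' p q s

variable {p q}

theorem pos_of_mem_commonSupp (hp : ∀ x, 0 ≤ p x) (hq : ∀ x, 0 ≤ q x) {x : α}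
    (hx : x ∈ commonSupp p q) : 0 < p x ∧ 0 < q x := by
  rw [commonSupp, mem_filter] at hx
  exact ⟨(hp x).lt_of_ne' hx.2.1, (hq x).lt_of_ne' hx.2.2⟩

theorem tiltedMoment_zero (s : ℝ) :
    tiltedMoment p q 0 s = ∑ x ∈ commonSupp p q, tiltedWeight p q s x := by
  simp [tiltedMoment]

theorem tiltedMoment_zero_pos (hp : ∀ x, 0 ≤ p x) (hpq : CommonSupport p q) (s : ℝ) :
    0 < tiltedMoment p q 0 s := by
  obtain ⟨x, hpx, hqx⟩ := hpq
  rw [tiltedMoment_zero]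
  exact sum_pos' (fun y _ => tiltedWeight_nonneg hp s y)
    ⟨x, by simp [commonSupp, hpx, hqx], mul_pos ((hp x).lt_of_ne' hpx) (exp_pos _)⟩

theorem hasDerivAt_tiltedMoment (k : ℕ) (s : ℝ) :
    HasDerivAt (tiltedMoment p q k) (tiltedMoment p q (k + 1) s) s :=
  (HasDerivAt.fun_sum fun x _ =>
    (hasDerivAt_tiltedWeight x s).mul_const (llr p q x ^ k)).congr_deriv
      (sum_congr rfl fun x _ => by ring)

theorem cherSum_eq_tiltedMoment_zero (hp : ∀ x, 0 ≤ p x) (hq : ∀ x, 0 ≤ q x) (s : ℝ) :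
    cherSum p q s = tiltedMoment p q 0 s := by
  rw [tiltedMoment_zero, cherSum, commonSupp, sum_filter]
  refine sum_congr rfl fun x _ => ?_
  by_cases h : p x = 0 ∨ q x = 0
  · rw [if_pos h, if_neg (by tauto)]
  · rw [not_or] at h
    have hp' := (hp x).lt_of_ne' h.1
    rw [if_neg (by tauto), if_pos h, tiltedWeight_eq_exp hp', rpow_def_of_pos hp',
      rpow_def_of_pos ((hq x).lt_of_ne' h.2), ← exp_add, llr]
    ring_nf

theorem cherSum_pos (hp : ∀ x, 0 ≤ p x) (hq : ∀ x, 0 ≤ q x) (hpq : CommonSupport p q)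
    (s : ℝ) : 0 < cherSum p q s :=
  cherSum_eq_tiltedMoment_zero hp hq s ▸ tiltedMoment_zero_pos hp hpq s

section Derivatives

variable (hp : ∀ x, 0 ≤ p x) (hq : ∀ x, 0 ≤ q x) (hpq : CommonSupport p q)
include hp hq hpq

theorem hasDerivAt_dC (s : ℝ) :
    HasDerivAt (dC p q) (-(tiltedMoment p q 1 s / tiltedMoment p q 0 s)) s := by
  have hdC : dC p q = fun s => -log (tiltedMoment p q 0 s) :=
    funext fun s => by rw [dC, cherSum_eq_tiltedMoment_zero hp hq]
  rw [hdC]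
  exact ((hasDerivAt_tiltedMoment 0 s).log (tiltedMoment_zero_pos hp hpq s).ne').fun_neg

theorem dC'_eq : dC' p q = fun s => -(tiltedMoment p q 1 s / tiltedMoment p q 0 s) :=
  funext fun s => (hasDerivAt_dC hp hq hpq s).deriv

theorem hasDerivAt_dC' (s : ℝ) :
    HasDerivAt (dC' p q) (-(tiltedMoment p q 2 s / tiltedMoment p q 0 s
      - (tiltedMoment p q 1 s / tiltedMoment p q 0 s) ^ 2)) s := by
  have h0 := tiltedMoment_zero_pos hp hpq s
  rw [dC'_eq hp hq hpq]
  refine (((hasDerivAt_tiltedMoment (p := p) (q := q) 1 s).div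
    (hasDerivAt_tiltedMoment 0 s) h0.ne').fun_neg).congr_deriv ?_
  field_simp

theorem dC''_eq (s : ℝ) :
    dC'' p q s = -(tiltedMoment p q 2 s / tiltedMoment p q 0 s
      - (tiltedMoment p q 1 s / tiltedMoment p q 0 s) ^ 2) :=
  (hasDerivAt_dC' hp hq hpq s).deriv

theorem sum_tiltedWeight_mul_sq (s : ℝ) :
    ∑ x ∈ commonSupp p q, tiltedWeight p q s x * (llr p q x + dC' p q s) ^ 2
      = -dC'' p q s * tiltedMoment p q 0 s := by
  have h0 := (tiltedMoment_zero_pos hp hpq s).ne'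
  have hexpand (c : ℝ) :
      ∑ x ∈ commonSupp p q, tiltedWeight p q s x * (llr p q x + c) ^ 2
        = tiltedMoment p q 2 s + 2 * c * tiltedMoment p q 1 s
          + c ^ 2 * tiltedMoment p q 0 s := by
    simp only [tiltedMoment, mul_sum, ← sum_add_distrib]
    exact sum_congr rfl fun x _ => by ring
  rw [hexpand, dC''_eq hp hq hpq, dC'_eq hp hq hpq]
  field_simp
  ring

theorem neg_dC''_nonneg (s : ℝ) : 0 ≤ -dC'' p q s := by
  have hsum : 0 ≤ ∑ x ∈ commonSupp p q, tiltedWeight p q s x * (llr p q x + dC' p q s) ^ 2 :=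
    sum_nonneg fun x _ => mul_nonneg (tiltedWeight_nonneg hp s x) (sq_nonneg _)
  rw [sum_tiltedWeight_mul_sq hp hq hpq] at hsum
  exact nonneg_of_mul_nonneg_left hsum (tiltedMoment_zero_pos hp hpq s)

theorem neg_dC''_le_sq {L : ℝ} (hL : ∀ x ∈ commonSupp p q, |llr p q x| ≤ L) (s : ℝ) :
    -dC'' p q s ≤ L ^ 2 := by
  have h0 := tiltedMoment_zero_pos hp hpq s
  have h2 : tiltedMoment p q 2 s ≤ L ^ 2 * tiltedMoment p q 0 s := by
    simp only [tiltedMoment, mul_sum, pow_zero, mul_one]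
    refine sum_le_sum fun x hx => ?_
    rw [mul_comm (L ^ 2)]
    exact mul_le_mul_of_nonneg_left (sq_le_sq' (abs_le.1 (hL x hx)).1 (abs_le.1 (hL x hx)).2)
      (tiltedWeight_nonneg hp s x)
  rw [dC''_eq hp hq hpq, neg_neg]
  have : tiltedMoment p q 2 s / tiltedMoment p q 0 s ≤ L ^ 2 := (div_le_iff₀ h0).2 h2
  nlinarith [sq_nonneg (tiltedMoment p q 1 s / tiltedMoment p q 0 s)]

theorem tiltedMoment_zero_div_two_le_sum_typicalSet (s : ℝ) :
    tiltedMoment p q 0 s / 2 ≤ ∑ x ∈ typicalSet p q s, tiltedWeight p q s x := by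
  rw [tiltedMoment_zero]
  refine sum_div_two_le_sum_filter_le _ _ _ (neg_dC''_nonneg hp hq hpq s)
    (fun x _ => tiltedWeight_nonneg hp s x) (fun x _ => sq_nonneg _) ?_
  rw [sum_tiltedWeight_mul_sq hp hq hpq, tiltedMoment_zero]

end Derivatives

theorem abs_llr_add_dC'_le_of_mem_typicalSet {s : ℝ} {x : α} (hx : x ∈ typicalSet p q s) :
    |llr p q x + dC' p q s| ≤ √(2 * -dC'' p q s) :=
  abs_le_sqrt (mem_filter.1 hx).2

theorem sgb_bound (hp : ∀ x, 0 ≤ p x) (hq : ∀ x, 0 ≤ q x) (hpq : CommonSupport p q)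
    (D0 D1 : Finset α) (hcover : ∀ x, x ∈ D0 ∨ x ∈ D1) {s : ℝ} (hs : s ∈ Set.Icc (0 : ℝ) 1) :
    -log (∑ x ∈ D1, p x) ≤
        dC p q s - s * dC' p q s + s * √(2 * -dC'' p q s) + log 4 ∨
      -log (∑ x ∈ D0, q x) ≤
        dC p q s + (1 - s) * dC' p q s + (1 - s) * √(2 * -dC'' p q s) + log 4 := by
  classical
  obtain ⟨hs0, hs1⟩ := hs
  set t := √(2 * -dC'' p q s)
  set T := typicalSet p q s
  have hM := tiltedMoment_zero_pos hp hpq s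
  have hlog : log (tiltedMoment p q 0 s / 4) = -dC p q s - log 4 := by
    rw [log_div hM.ne' four_ne_zero, dC, cherSum_eq_tiltedMoment_zero hp hq, neg_neg]
  have hT := tiltedMoment_zero_div_two_le_sum_typicalSet hp hq hpq s
  rw [← sum_filter_add_sum_filter_not T (· ∈ D1)] at hT
  have hclose (x : α) (hx : x ∈ T) : -t ≤ llr p q x + dC' p q s ∧ llr p q x + dC' p q s ≤ t :=
    abs_le.1 (abs_llr_add_dC'_le_of_mem_typicalSet hx)
  rcases le_or_gt (tiltedMoment p q 0 s / 4) (∑ x ∈ T with x ∈ D1, tiltedWeight p q s x)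
    with h | h
  · left
    have key := log_le_log_sum_add_of_le_mul_exp (c := s * (t - dC' p q s))
      (fun x hx => (mem_filter.1 hx).2) (fun x _ => hp x) (by positivity) h fun x hx =>
        mul_le_mul_of_nonneg_left (exp_le_exp.2 (mul_le_mul_of_nonneg_left
          (by linarith [hclose x (mem_filter.1 hx).1]) hs0)) (hp x)
    rw [hlog, mul_sub] at key
    linarith
  · right
    have key := log_le_log_sum_add_of_le_mul_exp (B := T.filter (· ∉ D1))
      (w := tiltedWeight p q s) (a := tiltedMoment p q 0 s / 4) (c := (1 - s) * (dC' p q s + t))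
      (fun x hx => (hcover x).resolve_right (mem_filter.1 hx).2) (fun x _ => hq x) (by positivity)
      (by linarith) fun x hx => by
        obtain ⟨hxT, -⟩ := mem_filter.1 hx
        obtain ⟨hpx, hqx⟩ := pos_of_mem_commonSupp hp hq (mem_filter.1 hxT).1
        rw [tiltedWeight_eq_mul_exp hpx hqx]
        exact mul_le_mul_of_nonneg_left (exp_le_exp.2 (by nlinarith [hclose x hxT])) (hq x)
    rw [hlog, mul_add] at key
    linarith

end Chernoff

section Channel

open Chernoff Real

variable {X Y : Type*} [Fintype Y] {n : ℕ} {Q : X → Y → ℝ}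

theorem prodDist_nonneg (hQ : ∀ x y, 0 ≤ Q x y) (w : Fin n → X) (y : Fin n → Y) :
    0 ≤ prodDist Q w y :=
  prod_nonneg fun _ _ => hQ _ _

theorem commonSupport_prodDist {w0 w1 : Fin n → X}
    (hsupp : ∀ i, CommonSupport (Q (w0 i)) (Q (w1 i))) :
    CommonSupport (prodDist Q w0) (prodDist Q w1) := by
  choose y hy0 hy1 using hsupp
  exact ⟨y, prod_ne_zero_iff.2 fun i _ => hy0 i, prod_ne_zero_iff.2 fun i _ => hy1 i⟩

theorem cherSum_prodDist (hQ : ∀ x y, 0 ≤ Q x y) (w0 w1 : Fin n → X) (s : ℝ) :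
    cherSum (prodDist Q w0) (prodDist Q w1) s = ∏ i, cherSum (Q (w0 i)) (Q (w1 i)) s := by
  unfold cherSum
  rw [prod_univ_sum, Fintype.piFinset_univ]
  refine sum_congr rfl fun y _ => ?_
  by_cases hy : ∀ i, Q (w0 i) (y i) ≠ 0 ∧ Q (w1 i) (y i) ≠ 0
  · have h0 : prodDist Q w0 y ≠ 0 := prod_ne_zero_iff.2 fun i _ => (hy i).1
    have h1 : prodDist Q w1 y ≠ 0 := prod_ne_zero_iff.2 fun i _ => (hy i).2
    rw [if_neg (by tauto), prod_congr rfl fun i _ => if_neg (not_or.2 (hy i)), prodDist,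
      prodDist, ← finsetProd_rpow _ _ (fun i _ => hQ _ _),
      ← finsetProd_rpow _ _ (fun i _ => hQ _ _), ← prod_mul_distrib]
  · obtain ⟨i, hi⟩ := not_forall.1 hy
    rw [not_and_or, not_ne_iff, not_ne_iff] at hi
    have hzero : prodDist Q w0 y = 0 ∨ prodDist Q w1 y = 0 :=
      hi.imp (prod_eq_zero (mem_univ i)) (prod_eq_zero (mem_univ i))
    rw [if_pos hzero, eq_comm]
    exact prod_eq_zero (mem_univ i) (if_pos hi)

theorem abs_llr_le_log_one_div {pmin : ℝ} (hQ : IsChannel Q) (hpmin : MinTransChan Q pmin)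
    (a b : X) : ∀ y ∈ commonSupp (Q a) (Q b), |llr (Q a) (Q b) y| ≤ log (1 / pmin) := by
  intro y hy
  obtain ⟨ha, hb⟩ := pos_of_mem_commonSupp (hQ a).1 (hQ b).1 hy
  have la := log_le_log hpmin.1 (hpmin.2.2 a y ha.ne')
  have lb := log_le_log hpmin.1 (hpmin.2.2 b y hb.ne')
  have ua := log_nonpos ha.le ((hQ a).le_one y)
  have ub := log_nonpos hb.le ((hQ b).le_one y)
  rw [llr, abs_le, one_div, log_inv]
  constructor <;> linarith

section Additivity

variable (hQ : ∀ x y, 0 ≤ Q x y) {w0 w1 : Fin n → X}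
  (hsupp : ∀ i, CommonSupport (Q (w0 i)) (Q (w1 i)))
include hQ hsupp

theorem dC_prodDist :
    dC (prodDist Q w0) (prodDist Q w1) = fun s => ∑ i, dC (Q (w0 i)) (Q (w1 i)) s := by
  funext s
  rw [dC, cherSum_prodDist hQ,
    log_prod fun i _ => (cherSum_pos (hQ _) (hQ _) (hsupp i) s).ne', ← sum_neg_distrib]
  rfl

theorem dC'_prodDist :
    dC' (prodDist Q w0) (prodDist Q w1) = fun s => ∑ i, dC' (Q (w0 i)) (Q (w1 i)) s := by
  funext s
  rw [dC', dC_prodDist hQ hsupp]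
  exact (HasDerivAt.fun_sum fun i _ =>
    (hasDerivAt_dC (hQ _) (hQ _) (hsupp i) s).differentiableAt.hasDerivAt).deriv

theorem dC''_prodDist (s : ℝ) :
    dC'' (prodDist Q w0) (prodDist Q w1) s = ∑ i, dC'' (Q (w0 i)) (Q (w1 i)) s := by
  rw [dC'', show deriv (dC (prodDist Q w0) (prodDist Q w1)) = dC' _ _ from rfl,
    dC'_prodDist hQ hsupp]
  exact (HasDerivAt.fun_sum fun i _ =>
    (hasDerivAt_dC' (hQ _) (hQ _) (hsupp i) s).differentiableAt.hasDerivAt).deriv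

end Additivity

theorem neg_dC''_prodDist_le {pmin : ℝ} (hQ : IsChannel Q) (hpmin : MinTransChan Q pmin)
    {w0 w1 : Fin n → X} (hsupp : ∀ i, CommonSupport (Q (w0 i)) (Q (w1 i))) (s : ℝ) :
    -dC'' (prodDist Q w0) (prodDist Q w1) s ≤ n * log (1 / pmin) ^ 2 := by
  have hQ0 : ∀ x y, 0 ≤ Q x y := fun x => (hQ x).1
  rw [dC''_prodDist hQ0 hsupp, ← sum_neg_distrib]
  calc ∑ i, -dC'' (Q (w0 i)) (Q (w1 i)) s ≤ ∑ _i : Fin n, log (1 / pmin) ^ 2 :=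
        sum_le_sum fun i _ => neg_dC''_le_sq (hQ0 _) (hQ0 _) (hsupp i)
          (abs_llr_le_log_one_div hQ hpmin _ _) s
    _ = n * log (1 / pmin) ^ 2 := by simp

end Channel

theorem sgb_dmc_general {X Y : Type*} [Fintype X] [Fintype Y] {n : ℕ}
    (Q : X → Y → ℝ) (hQ : IsChannel Q)
    (pmin : ℝ) (hpmin : MinTransChan Q pmin)
    (w0 w1 : Fin n → X)
    (hsupp : ∀ i, CommonSupport (Q (w0 i)) (Q (w1 i)))
    (D0 D1 : Finset (Fin n → Y))
    (hcover : ∀ x, x ∈ D0 ∨ x ∈ D1)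
    (s : ℝ) (hs : s ∈ Set.Icc (0 : ℝ) 1) :
    (- Real.log (∑ z ∈ D1, prodDist Q w0 z) ≤
        dC (prodDist Q w0) (prodDist Q w1) s -
          s * dC' (prodDist Q w0) (prodDist Q w1) s +
          Real.sqrt (2 * n) * Real.log (1 / pmin) + Real.log 4) ∨
    (- Real.log (∑ z ∈ D0, prodDist Q w1 z) ≤
        dC (prodDist Q w0) (prodDist Q w1) s +
          (1 - s) * dC' (prodDist Q w0) (prodDist Q w1) s +
          Real.sqrt (2 * n) * Real.log (1 / pmin) + Real.log 4) := by
  have hQ0 : ∀ x y, 0 ≤ Q x y := fun x => (hQ x).1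
  have hL : 0 ≤ Real.log (1 / pmin) := by
    obtain ⟨x, y, hxy⟩ := hpmin.2.1
    rw [one_div, Real.log_inv, neg_nonneg]
    exact Real.log_nonpos hpmin.1.le (hxy ▸ (hQ x).le_one y)
  set t := √(2 * -dC'' (prodDist Q w0) (prodDist Q w1) s)
  have ht : t ≤ √(2 * n) * Real.log (1 / pmin) := by
    rw [← Real.sqrt_sq hL, ← Real.sqrt_mul (by positivity)]
    exact Real.sqrt_le_sqrt (by nlinarith [neg_dC''_prodDist_le hQ hpmin hsupp s])
  have hst : s * t ≤ t := mul_le_of_le_one_left (Real.sqrt_nonneg _) hs.2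
  have hst' : (1 - s) * t ≤ t := mul_le_of_le_one_left (Real.sqrt_nonneg _) (by linarith [hs.1])
  rcases Chernoff.sgb_bound (prodDist_nonneg hQ0 w0) (prodDist_nonneg hQ0 w1)
    (commonSupport_prodDist hsupp) D0 D1 hcover hs with h | h
  · exact Or.inl (by linarith)
  · exact Or.inr (by linarith)

/-- Lemma 7 of the paper: Shannon–Gallager–Berlekamp bound for DMCs. -/
theorem sgb_dmc {X Y : Type*} [Fintype X] [Fintype Y] {n : ℕ}
    (Q : X → Y → ℝ) (hQ : IsChannel Q)
    (pmin : ℝ) (hpmin : MinTransChan Q pmin)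
    (w0 w1 : Fin n → X)
    (hsupp : ∀ i, CommonSupport (Q (w0 i)) (Q (w1 i)))
    (D0 D1 : Finset (Fin n → Y)) (hdisj : Disjoint D0 D1)
    (hcover : ∀ x, x ∈ D0 ∨ x ∈ D1)
    (s : ℝ) (hs : s ∈ Set.Icc (0 : ℝ) 1) :
    (- Real.log (∑ z ∈ D1, prodDist Q w0 z) ≤
        dC (prodDist Q w0) (prodDist Q w1) s -
          s * dC' (prodDist Q w0) (prodDist Q w1) s +
          Real.sqrt (2 * n) * Real.log (1 / pmin) + Real.log 4) ∨
    (- Real.log (∑ z ∈ D0, prodDist Q w1 z) ≤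
        dC (prodDist Q w0) (prodDist Q w1) s +
          (1 - s) * dC' (prodDist Q w0) (prodDist Q w1) s +
          Real.sqrt (2 * n) * Real.log (1 / pmin) + Real.log 4) :=
  sgb_dmc_general Q hQ pmin hpmin w0 w1 hsupp D0 D1 hcover s hs

end
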